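/- arXiv:1804.05479 — 3 statements merged into one kernel-verified Lean document; each statement's English description precedes it below -/
import Mathlib

section
/- Fix μ > 0 and K > 0, and let p(s) = e^{μs}/(e^{μs} + K). Then for any constants A, B ∈ ℝ, the function f(s) = A + B p(s) + (2s/μ)(1 − 2p(s)) satisfies the ODE ½ f''(s) + (p(s) − ½) μ f'(s) + 1 = 0 for all s ∈ ℝ. -/
/-!
The function `p` solves the logistic equation `p' = μ p (1 - p)`, and this is all the proof
uses about it. Writing `q = p (1 - p)`, so that `q' = μ q (1 - 2p)`, one gets
`f' = B μ q + (2/μ)(1 - 2p) - 4 s q` and `f'' = B μ² q (1 - 2p) - 8 q - 4 s μ q (1 - 2p)`;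
the terms in `B` and in `s` cancel in `½ f'' + (p - ½) μ f'`, which leaves
`-4q - (1 - 2p)² = -1`.
-/

open Real

theorem hasDerivAt_exp_div_exp_add {μ K : ℝ} (hK : 0 ≤ K) (s : ℝ) :
    HasDerivAt (fun s => exp (μ * s) / (exp (μ * s) + K))
      (μ * (exp (μ * s) / (exp (μ * s) + K)) * (1 - exp (μ * s) / (exp (μ * s) + K))) s := by
  have hexp : HasDerivAt (fun s => exp (μ * s)) (exp (μ * s) * μ) s := by
    simpa using ((hasDerivAt_id s).const_mul μ).exp
  have hne : exp (μ * s) + K ≠ 0 := by positivity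
  refine (hexp.div (hexp.add_const K) hne).congr_deriv ?_
  field_simp

section Logistic

variable {μ : ℝ} {p : ℝ → ℝ} (hp : ∀ s, HasDerivAt p (μ * p s * (1 - p s)) s)
include hp

theorem hasDerivAt_mul_one_sub_of_logistic (s : ℝ) :
    HasDerivAt (fun s => p s * (1 - p s)) (μ * (p s * (1 - p s)) * (1 - 2 * p s)) s := by
  refine ((hp s).mul ((hp s).const_sub 1)).congr_deriv ?_
  ring

theorem hasDerivAt_solution_of_logistic (hμ : μ ≠ 0) (A B s : ℝ) :
    HasDerivAt (fun s => A + B * p s + (2 * s / μ) * (1 - 2 * p s))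
      (B * μ * (p s * (1 - p s)) + 2 / μ * (1 - 2 * p s) - 4 * s * (p s * (1 - p s))) s := by
  have hlin : HasDerivAt (fun s : ℝ => 2 * s / μ) (2 / μ) s := by
    simpa using ((hasDerivAt_id s).const_mul 2).div_const μ
  refine (((hp s).const_mul B).const_add A |>.add
    (hlin.mul (((hp s).const_mul 2).const_sub 1))).congr_deriv ?_
  field_simp
  ring

theorem hasDerivAt_deriv_solution_of_logistic (hμ : μ ≠ 0) (B s : ℝ) :
    HasDerivAt
      (fun s => B * μ * (p s * (1 - p s)) + 2 / μ * (1 - 2 * p s) - 4 * s * (p s * (1 - p s)))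
      (B * μ ^ 2 * (p s * (1 - p s)) * (1 - 2 * p s) - 8 * (p s * (1 - p s))
        - 4 * s * μ * (p s * (1 - p s)) * (1 - 2 * p s)) s := by
  have hq := hasDerivAt_mul_one_sub_of_logistic hp s
  refine ((hq.const_mul (B * μ)).add (((hp s).const_mul 2).const_sub 1 |>.const_mul (2 / μ)) |>.sub
    (((hasDerivAt_id' s).const_mul 4).mul hq)).congr_deriv ?_
  field_simp
  ring

theorem ode_solution_of_logistic (hμ : μ ≠ 0) (A B s : ℝ) :
    let f := fun s => A + B * p s + (2 * s / μ) * (1 - 2 * p s)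
    (1 / 2) * deriv (deriv f) s + (p s - 1 / 2) * μ * deriv f s + 1 = 0 := by
  intro f
  have hf' : deriv f = fun s =>
      B * μ * (p s * (1 - p s)) + 2 / μ * (1 - 2 * p s) - 4 * s * (p s * (1 - p s)) :=
    funext fun s => (hasDerivAt_solution_of_logistic hp hμ A B s).deriv
  rw [hf', (hasDerivAt_deriv_solution_of_logistic hp hμ B s).deriv]
  field_simp
  ring

end Logistic

/-- with `p s = exp (μ s) / (exp (μ s) + K)` (`μ > 0`, `K > 0`), for any
constants `A B`, the function `f s = A + B * p s + (2 s / μ) * (1 - 2 * p s)` satisfies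
`½ f'' (s) + (p s - ½) μ f' (s) + 1 = 0` for all `s`. -/
theorem statement3 (μ K : ℝ) (hμ : 0 < μ) (hK : 0 < K)
    (p : ℝ → ℝ) (hp : ∀ s, p s = Real.exp (μ * s) / (Real.exp (μ * s) + K))
    (A B : ℝ) (f : ℝ → ℝ)
    (hf : ∀ s, f s = A + B * p s + (2 * s / μ) * (1 - 2 * p s)) :
    ∀ s, (1 / 2) * deriv (deriv f) s + (p s - 1 / 2) * μ * deriv f s + 1 = 0 := by
  obtain rfl : p = fun s => exp (μ * s) / (exp (μ * s) + K) := funext hp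
  obtain rfl := funext hf
  exact ode_solution_of_logistic (hasDerivAt_exp_div_exp_add hK.le) hμ.ne' A B
end

section
/- Fix μ > 0 and K > 0 and let p(s) = e^{μs}/(e^{μs} + K). Every solution f of the ODE ½f'' + (p − ½)μ f' + 1 = 0 on ℝ has the form f(s) = Ã + B̃/(e^{μs} + K) + (2s/μ)(1 − 2p(s)) for some constants Ã, B̃. -/
/-!
For `g = f'` the equation is first order: `g' + (2p - 1) μ g + 2 = 0`. Writing `E = e^{μs}`,
one has `(2p - 1) μ = μ (E - K) / (E + K)`, so `W = (E + K)² / E` is an integrating factor and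
`W f' + 2V` is constant, where `V = (E - K² / E) / μ + 2Ks` is a primitive of `W`. Since
`E / (E + K)² = 1 / W`, dividing by `W` exhibits `f'` as the derivative of
`B / (E + K) + (2s / μ)(1 - 2p)`.
-/

open Real

section IntegratingFactor

variable {𝕜 : Type*} [RCLike 𝕜]

theorem exists_forall_eq_const_add_of_hasDerivAt {G : Type*} [NormedAddCommGroup G]
    [NormedSpace 𝕜 G] {f F f' : 𝕜 → G}
    (hf : ∀ s, HasDerivAt f (f' s) s) (hF : ∀ s, HasDerivAt F (f' s) s) :
    ∃ A, ∀ s, f s = A + F s := by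
  have hd : ∀ s, HasDerivAt (fun t => f t - F t) 0 s := fun s =>
    ((hf s).sub (hF s)).congr_deriv (sub_self _)
  refine ⟨f 0 - F 0, fun s => ?_⟩
  rw [← sub_eq_iff_eq_add]
  exact is_const_of_deriv_eq_zero (fun t => (hd t).differentiableAt) (fun t => (hd t).deriv) s 0

theorem exists_forall_mul_add_eq_const {g g' a b W V : 𝕜 → 𝕜}
    (hg : ∀ s, HasDerivAt g (g' s) s) (hW : ∀ s, HasDerivAt W (a s * W s) s)
    (hV : ∀ s, HasDerivAt V (b s * W s) s) (hode : ∀ s, g' s + a s * g s + b s = 0) :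
    ∃ C, ∀ s, W s * g s + V s = C := by
  have hd : ∀ s, HasDerivAt (fun t => W t * g t + V t) 0 s := fun s => by
    refine (((hW s).mul (hg s)).add (hV s)).congr_deriv ?_
    linear_combination W s * hode s
  exact ⟨W 0 * g 0 + V 0, fun s =>
    is_const_of_deriv_eq_zero (fun t => (hd t).differentiableAt) (fun t => (hd t).deriv) s 0⟩

end IntegratingFactor

namespace LogisticDrift

noncomputable def integratingFactor (μ K s : ℝ) : ℝ :=
  (exp (μ * s) + K) ^ 2 * exp (-(μ * s))

noncomputable def integratingFactorPrimitive (μ K s : ℝ) : ℝ :=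
  (exp (μ * s) - K ^ 2 * exp (-(μ * s))) / μ + 2 * K * s

variable {μ K : ℝ}

theorem exp_mul_add_pos (hK : 0 ≤ K) (s : ℝ) : 0 < exp (μ * s) + K := by
  positivity

theorem integratingFactor_pos (hK : 0 ≤ K) (s : ℝ) : 0 < integratingFactor μ K s := by
  unfold integratingFactor
  have := exp_mul_add_pos (μ := μ) hK s
  positivity

theorem hasDerivAt_exp_mul (μ s : ℝ) :
    HasDerivAt (fun t => exp (μ * t)) (μ * exp (μ * s)) s := by
  simpa [mul_comm] using ((hasDerivAt_id s).const_mul μ).exp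

theorem hasDerivAt_exp_neg_mul (μ s : ℝ) :
    HasDerivAt (fun t => exp (-(μ * t))) (-μ * exp (-(μ * s))) s := by
  simpa [mul_comm] using ((hasDerivAt_id s).const_mul μ).neg.exp

theorem hasDerivAt_integratingFactor (hK : 0 ≤ K) (s : ℝ) :
    HasDerivAt (integratingFactor μ K)
      ((2 * (exp (μ * s) / (exp (μ * s) + K)) - 1) * μ * integratingFactor μ K s) s := by
  have hE := (exp_mul_add_pos (μ := μ) hK s).ne'
  refine ((((hasDerivAt_exp_mul μ s).add_const K).fun_pow 2).mul
    (hasDerivAt_exp_neg_mul μ s)).congr_deriv ?_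
  unfold integratingFactor
  field_simp
  ring

theorem hasDerivAt_integratingFactorPrimitive (hμ : μ ≠ 0) (s : ℝ) :
    HasDerivAt (integratingFactorPrimitive μ K) (integratingFactor μ K s) s := by
  refine (((((hasDerivAt_exp_mul μ s).sub
    ((hasDerivAt_exp_neg_mul μ s).const_mul (K ^ 2))).div_const μ).add
    ((hasDerivAt_id s).const_mul (2 * K)))).congr_deriv ?_
  unfold integratingFactor
  rw [exp_neg]
  field_simp
  ring

theorem hasDerivAt_const_div_exp_add (hK : 0 ≤ K) (c s : ℝ) :
    HasDerivAt (fun t => c / (exp (μ * t) + K)) (-(c * μ) / integratingFactor μ K s) s := by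
  have hE := (exp_mul_add_pos (μ := μ) hK s).ne'
  refine (((hasDerivAt_exp_mul μ s).add_const K).fun_inv hE |>.const_mul c).congr_deriv ?_
  unfold integratingFactor
  rw [exp_neg]
  field_simp

theorem hasDerivAt_particularSolution (hμ : μ ≠ 0) (hK : 0 ≤ K) (s : ℝ) :
    HasDerivAt (fun t => 2 * t / μ * (1 - 2 * (exp (μ * t) / (exp (μ * t) + K))))
      (-(2 * integratingFactorPrimitive μ K s) / integratingFactor μ K s) s := by
  have hE := (exp_mul_add_pos (μ := μ) hK s).ne'
  refine ((((hasDerivAt_id' s).const_mul 2).div_const μ).mul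
    ((((hasDerivAt_exp_mul μ s).fun_div ((hasDerivAt_exp_mul μ s).add_const K) hE).const_mul
      2).const_sub 1)).congr_deriv ?_
  unfold integratingFactor integratingFactorPrimitive
  rw [exp_neg]
  field_simp
  ring

end LogisticDrift

open LogisticDrift in
/-- with `p s = exp (μ s) / (exp (μ s) + K)` (`μ > 0`, `K > 0`), every
twice-differentiable solution of `½ f'' + (p - ½) μ f' + 1 = 0` on `ℝ` has the form
`f s = A0 + B0 / (exp (μ s) + K) + (2 s / μ) * (1 - 2 * p s)` for some constants `A0, B0`. -/
theorem statement4 (μ K : ℝ) (hμ : 0 < μ) (hK : 0 < K)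
    (p : ℝ → ℝ) (hp : ∀ s, p s = Real.exp (μ * s) / (Real.exp (μ * s) + K))
    (f f' f'' : ℝ → ℝ)
    (hf' : ∀ s, HasDerivAt f (f' s) s)
    (hf'' : ∀ s, HasDerivAt f' (f'' s) s)
    (hode : ∀ s, (1 / 2) * f'' s + (p s - 1 / 2) * μ * f' s + 1 = 0) :
    ∃ A0 B0 : ℝ, ∀ s,
      f s = A0 + B0 / (Real.exp (μ * s) + K) + (2 * s / μ) * (1 - 2 * p s) := by
  obtain ⟨C, hC⟩ := exists_forall_mul_add_eq_const (b := fun _ => 2) hf''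
    (fun s => hp s ▸ hasDerivAt_integratingFactor hK.le s)
    (fun s => (hasDerivAt_integratingFactorPrimitive hμ.ne' s).const_mul 2)
    (fun s => by linear_combination 2 * hode s)
  have hF : ∀ s, HasDerivAt (fun t => -C / μ / (exp (μ * t) + K) +
      2 * t / μ * (1 - 2 * (exp (μ * t) / (exp (μ * t) + K)))) (f' s) s := fun s => by
    refine ((hasDerivAt_const_div_exp_add hK.le (-C / μ) s).add
      (hasDerivAt_particularSolution hμ.ne' hK.le s)).congr_deriv ?_
    have hW := (integratingFactor_pos (μ := μ) hK.le s).ne'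
    field_simp
    linear_combination -hC s
  obtain ⟨A, hA⟩ := exists_forall_eq_const_add_of_hasDerivAt hf' hF
  exact ⟨A, -C / μ, fun s => by rw [hA s, hp s]; ring⟩
end

section
/- Let Y be a standard Brownian motion started at y_0, define its local time L at 0 and set X_1(t) = X_2(0) + Y_t^+ − ½L_t and X_2(t) = X_2(0) + Y_t^− − ½L_t, and W_t = ∫_0^t sign(Y_s) dY_s. Then dX_1 = 1_{Y>0} dW and dX_2 = 1_{Y≤0} dW, i.e., (X_1, X_2) is a weak solution of the SDE dX_j = I_j(X) dW with X_1(0) − X_2(0) = y_0, where I_1(x) = 1_{x_1 > x_2} and I_2(x) = 1_{x_2 ≥ x_1}. -/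
/-- Tanaka construction for `N = 2`: let `Y` be a (pathwise) Brownian
motion started at `y₀` with local time `L` at `0`, and let `SI g Z` denote the
stochastic integral `t ↦ ∫₀ᵗ g s dZ s`, assumed to satisfy the associativity
`SI g (SI h Z) = SI (g·h) Z`, negation-linearity, and Tanaka's formulae
`Y⁺ₜ = y₀⁺ + ∫₀ᵗ 1_{Y>0} dY + ½Lₜ`, `Y⁻ₜ = y₀⁻ − ∫₀ᵗ 1_{Y≤0} dY + ½Lₜ`.
With `W = ∫ sign(Y) dY`, `X₁ t = X₂(0) + Y⁺ₜ − ½Lₜ` and `X₂ t = X₂(0) + Y⁻ₜ − ½Lₜ`,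
the pair `(X₁, X₂)` solves `dX₁ = 1_{X₁ > X₂} dW`, `dX₂ = 1_{X₂ ≥ X₁} dW`, with
`X₁(0) − X₂(0) = y₀`. -/
theorem statement9
    (SI : (ℝ → ℝ) → (ℝ → ℝ) → (ℝ → ℝ))
    (hSI_zero : ∀ g Z, SI g Z 0 = 0)
    (hSI_assoc : ∀ g h Z, SI g (SI h Z) = SI (fun s => g s * h s) Z)
    (hSI_neg : ∀ g Z t, SI (fun s => -g s) Z t = -SI g Z t)
    (Y L : ℝ → ℝ) (y₀ : ℝ) (hY0 : Y 0 = y₀) (hL0 : L 0 = 0)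
    (hTanakaPlus : ∀ t, max (Y t) 0 =
      max y₀ 0 + SI (fun s => if 0 < Y s then 1 else 0) Y t + L t / 2)
    (hTanakaMinus : ∀ t, max (-Y t) 0 =
      max (-y₀) 0 - SI (fun s => if Y s ≤ 0 then 1 else 0) Y t + L t / 2)
    (W : ℝ → ℝ) (hW : W = SI (fun s => if 0 < Y s then 1 else -1) Y)
    (x₂₀ : ℝ) (X₁ X₂ : ℝ → ℝ)
    (hX₁ : ∀ t, X₁ t = x₂₀ + max (Y t) 0 - L t / 2)
    (hX₂ : ∀ t, X₂ t = x₂₀ + max (-Y t) 0 - L t / 2) :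
    (∀ t, X₁ t = X₁ 0 + SI (fun s => if X₂ s < X₁ s then 1 else 0) W t) ∧
    (∀ t, X₂ t = X₂ 0 + SI (fun s => if X₁ s ≤ X₂ s then 1 else 0) W t) ∧
    X₁ 0 - X₂ 0 = y₀ := by
  have hdiff : ∀ s, X₁ s - X₂ s = Y s := by
    intro s
    rw [hX₁, hX₂]
    rcases le_or_gt (Y s) 0 with h | h
    · rw [max_eq_right h, max_eq_left (by linarith)]; ring
    · rw [max_eq_left h.le, max_eq_right (by linarith)]; ring
  have hiff1 : ∀ s, (X₂ s < X₁ s) ↔ (0 < Y s) := by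
    intro s; rw [← hdiff s]; constructor <;> intro h <;> linarith
  have hfun1 : (fun s => if X₂ s < X₁ s then (1:ℝ) else 0)
      = (fun s => if 0 < Y s then (1:ℝ) else 0) := by
    funext s; simp [hiff1 s]
  have hfun2 : (fun s => if X₁ s ≤ X₂ s then (1:ℝ) else 0)
      = (fun s => if Y s ≤ 0 then (1:ℝ) else 0) := by
    funext s
    have : (X₁ s ≤ X₂ s) ↔ (Y s ≤ 0) := by
      rw [← hdiff s]; constructor <;> intro h <;> linarith
    simp [this]
  have hSI1 : ∀ t, SI (fun s => if 0 < Y s then (1:ℝ) else 0) W t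
      = SI (fun s => if 0 < Y s then (1:ℝ) else 0) Y t := by
    intro t
    rw [hW, hSI_assoc]
    congr 1
    funext s
    by_cases h : 0 < Y s <;> simp [h]
  have hSI2 : ∀ t, SI (fun s => if Y s ≤ 0 then (1:ℝ) else 0) W t
      = - SI (fun s => if Y s ≤ 0 then (1:ℝ) else 0) Y t := by
    intro t
    rw [hW, hSI_assoc]
    rw [show (fun s => (if Y s ≤ 0 then (1:ℝ) else 0) * (if 0 < Y s then 1 else -1))
        = (fun s => -(if Y s ≤ 0 then (1:ℝ) else 0)) by
      funext s
      by_cases h : Y s ≤ 0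
      · simp [h, not_lt.mpr h]
      · simp [h, not_le.mp h]]
    exact hSI_neg _ _ _
  have hX₁0 : X₁ 0 = x₂₀ + max y₀ 0 := by rw [hX₁ 0, hY0, hL0]; ring
  have hX₂0 : X₂ 0 = x₂₀ + max (-y₀) 0 := by rw [hX₂ 0, hY0, hL0]; ring
  refine ⟨?_, ?_, ?_⟩
  · intro t
    rw [hfun1, hSI1, hX₁ t, hTanakaPlus t, hX₁0]; ring
  · intro t
    rw [hfun2, hSI2, hX₂ t, hTanakaMinus t, hX₂0]; ring
  · rw [hX₁0, hX₂0]
    rcases le_or_gt y₀ 0 with h | h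
    · rw [max_eq_right h, max_eq_left (by linarith)]; ring
    · rw [max_eq_left h.le, max_eq_right (by linarith)]; ring
end
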